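/- arXiv:2403.19627 — 7 statements merged into one kernel-verified Lean document; each statement's English description precedes it below -/
import Mathlib

section
/- Let n ≥ 4. Suppose s : Fin n → Fin n → ℝ satisfies s i j = s j i and s i i = 0, and m : Fin n → Fin n → Fin n → Fin n → ℝ satisfies m i j k l = - (m j i k l). Assume that for all pairwise distinct i, j, k, l, s i k + s i l + s j k + s j l - 2 * m i j k l ≥ 0. Define Ric i = ∑_{j} s i j. Then for all pairwise distinct i, j, k one has Ric i + Ric j - 2 * s i j + (n - 4) * (s i k + s j k) ≥ 0. -/
/-!
Adding the isotropic curvature inequalities for the frames `(i, j, k, l)` and `(j, i, k, l)`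
cancels the `m`-terms by antisymmetry, so `s i l + s j l + (s i k + s j k) ≥ 0` for every
`l ∉ {i, j, k}`. Summing over these `n - 3` indices `l` gives the claim: the full sum over all `l`
is `Ric i + Ric j + n (s i k + s j k)`, and the three omitted terms contribute
`2 s i j + 4 (s i k + s j k)`.
-/

open Finset

theorem Finset.sum_univ_sdiff_triple_add {ι M : Type*} [Fintype ι] [DecidableEq ι]
    [AddCommMonoid M] (f : ι → M) {i j k : ι} (hij : i ≠ j) (hik : i ≠ k) (hjk : j ≠ k) :
    ∑ l ∈ univ \ {i, j, k}, f l + (f i + f j + f k) = ∑ l, f l := by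
  rw [← sum_sdiff (subset_univ {i, j, k}), sum_insert (by simp [hij, hik]),
    sum_insert (by simp [hjk]), sum_singleton, add_assoc]

theorem sectional_pair_add_nonneg_of_isotropic {ι : Type*} (s : ι → ι → ℝ)
    (m : ι → ι → ι → ι → ℝ) (hanti : ∀ i j k l, m i j k l = - (m j i k l))
    (hWPIC : ∀ i j k l : ι, i ≠ j → i ≠ k → i ≠ l → j ≠ k → j ≠ l → k ≠ l →
      s i k + s i l + s j k + s j l - 2 * m i j k l ≥ 0)
    {i j k l : ι} (hij : i ≠ j) (hik : i ≠ k) (hil : i ≠ l) (hjk : j ≠ k) (hjl : j ≠ l)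
    (hkl : k ≠ l) :
    0 ≤ s i k + s i l + s j k + s j l := by
  have hijkl := hWPIC i j k l hij hik hil hjk hjl hkl
  have hjikl := hWPIC j i k l hij.symm hjk hjl hik hil hkl
  linarith [hanti i j k l]

theorem stmt_1_general (n : ℕ)
    (s : Fin n → Fin n → ℝ) (m : Fin n → Fin n → Fin n → Fin n → ℝ)
    (hsym : ∀ i j, s i j = s j i) (hdiag : ∀ i, s i i = 0)
    (hanti : ∀ i j k l, m i j k l = - (m j i k l))
    (hWPIC : ∀ i j k l : Fin n, i ≠ j → i ≠ k → i ≠ l → j ≠ k → j ≠ l → k ≠ l →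
      s i k + s i l + s j k + s j l - 2 * m i j k l ≥ 0)
    (Ric : Fin n → ℝ) (hRic : ∀ i, Ric i = ∑ j, s i j) :
    ∀ i j k : Fin n, i ≠ j → i ≠ k → j ≠ k →
      Ric i + Ric j - 2 * s i j + ((n : ℝ) - 4) * (s i k + s j k) ≥ 0 := by
  intro i j k hij hik hjk
  set c := s i k + s j k
  have hterm : ∀ l ∈ univ \ {i, j, k}, 0 ≤ s i l + s j l + c := by
    intro l hl
    simp only [mem_sdiff, mem_univ, mem_insert, mem_singleton, true_and, not_or] at hl
    obtain ⟨hli, hlj, hlk⟩ := hl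
    have := sectional_pair_add_nonneg_of_isotropic s m hanti hWPIC hij hik (Ne.symm hli) hjk
      (Ne.symm hlj) (Ne.symm hlk)
    linarith
  have htotal : ∑ l, (s i l + s j l + c) = Ric i + Ric j + n * c := by
    simp [sum_add_distrib, hRic]
  have hsplit := sum_univ_sdiff_triple_add (fun l => s i l + s j l + c) hij hik hjk
  rw [htotal, hdiag, hdiag, hsym j i] at hsplit
  linarith [sum_nonneg hterm]

theorem stmt_1 (n : ℕ) (hn : 4 ≤ n)
    (s : Fin n → Fin n → ℝ) (m : Fin n → Fin n → Fin n → Fin n → ℝ)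
    (hsym : ∀ i j, s i j = s j i) (hdiag : ∀ i, s i i = 0)
    (hanti : ∀ i j k l, m i j k l = - (m j i k l))
    (hWPIC : ∀ i j k l : Fin n, i ≠ j → i ≠ k → i ≠ l → j ≠ k → j ≠ l → k ≠ l →
      s i k + s i l + s j k + s j l - 2 * m i j k l ≥ 0)
    (Ric : Fin n → ℝ) (hRic : ∀ i, Ric i = ∑ j, s i j) :
    ∀ i j k : Fin n, i ≠ j → i ≠ k → j ≠ k →
      Ric i + Ric j - 2 * s i j + ((n : ℝ) - 4) * (s i k + s j k) ≥ 0 :=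
  stmt_1_general n s m hsym hdiag hanti hWPIC Ric hRic
end

section
/- Let n ≥ 4. Suppose s : Fin n → Fin n → ℝ satisfies s i j = s j i and s i i = 0, and m : Fin n → Fin n → Fin n → Fin n → ℝ satisfies m i j k l = - (m j i k l). Assume that for all pairwise distinct i, j, k, l, s i k + s i l + s j k + s j l - 2 * m i j k l ≥ 0. Define Ric i = ∑_{j} s i j. Then for all distinct i, j one has Ric i + Ric j - 2 * s i j ≥ 0. -/
/-!
Set `f k = s i k + s j k`. Then `Ric i + Ric j - 2 s i j` is the sum of `f` over the `n - 2 ≥ 2`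
indices `k ∉ {i, j}`, and adding the isotropic curvature inequalities for `(i, j, k, l)` and
`(j, i, k, l)` cancels the `m`-terms and gives `f k + f l ≥ 0` for distinct such `k, l`.
Hence at most one summand is negative, and it is compensated by any other one.
-/

open Finset

theorem Finset.sum_nonneg_of_add_nonneg {ι M : Type*} [DecidableEq ι] [AddCommGroup M]
    [LinearOrder M] [IsOrderedAddMonoid M] {S : Finset ι} (hS : S.card ≠ 1) {f : ι → M}
    (hf : ∀ k ∈ S, ∀ l ∈ S, k ≠ l → 0 ≤ f k + f l) : 0 ≤ ∑ k ∈ S, f k := by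
  by_cases hall : ∀ k ∈ S, 0 ≤ f k
  · exact sum_nonneg hall
  push Not at hall
  obtain ⟨a, ha, hfa⟩ := hall
  obtain ⟨b, hb⟩ : (S.erase a).Nonempty := by
    rw [← card_pos, card_erase_of_mem ha]
    have := card_pos.mpr ⟨a, ha⟩
    omega
  have hrest : 0 ≤ ∑ k ∈ (S.erase a).erase b, f k := by
    refine sum_nonneg fun k hk => ?_
    have hka := hf k (mem_of_mem_erase (mem_of_mem_erase hk)) a ha
      (ne_of_mem_erase (mem_of_mem_erase hk))
    exact le_of_not_gt fun hk => (add_neg hk hfa).not_ge hka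
  rw [← add_sum_erase S f ha, ← add_sum_erase _ f hb, ← add_assoc]
  exact add_nonneg (hf a ha b (mem_of_mem_erase hb) (ne_of_mem_erase hb).symm) hrest

theorem Finset.sum_sdiff_pair_eq {ι R : Type*} [Fintype ι] [DecidableEq ι] [CommRing R]
    {s : ι → ι → R} (hsym : ∀ i j, s i j = s j i) (hdiag : ∀ i, s i i = 0) {i j : ι}
    (hij : i ≠ j) :
    ∑ k ∈ univ \ {i, j}, (s i k + s j k) = ∑ k, s i k + ∑ k, s j k - 2 * s i j := by
  rw [eq_sub_iff_add_eq, ← sum_add_distrib, ← sum_sdiff (subset_univ {i, j}), sum_pair hij,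
    hdiag, hdiag, hsym j i]
  ring

theorem stmt_2 (n : ℕ) (hn : 4 ≤ n)
    (s : Fin n → Fin n → ℝ) (m : Fin n → Fin n → Fin n → Fin n → ℝ)
    (hsym : ∀ i j, s i j = s j i) (hdiag : ∀ i, s i i = 0)
    (hanti : ∀ i j k l, m i j k l = - (m j i k l))
    (hWPIC : ∀ i j k l : Fin n, i ≠ j → i ≠ k → i ≠ l → j ≠ k → j ≠ l → k ≠ l →
      s i k + s i l + s j k + s j l - 2 * m i j k l ≥ 0)
    (Ric : Fin n → ℝ) (hRic : ∀ i, Ric i = ∑ j, s i j) :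
    ∀ i j : Fin n, i ≠ j → Ric i + Ric j - 2 * s i j ≥ 0 := by
  intro i j hij
  rw [hRic, hRic, ← sum_sdiff_pair_eq hsym hdiag hij]
  refine sum_nonneg_of_add_nonneg ?_ fun k hk l hl hkl => ?_
  · rw [card_univ_sdiff, card_pair hij, Fintype.card_fin]
    omega
  · simp only [mem_sdiff, mem_univ, mem_insert, mem_singleton, true_and, not_or] at hk hl
    have hijkl := hWPIC i j k l hij (Ne.symm hk.1) (Ne.symm hl.1) (Ne.symm hk.2) (Ne.symm hl.2) hkl
    have hjikl := hWPIC j i k l (Ne.symm hij) (Ne.symm hk.2) (Ne.symm hl.2) (Ne.symm hk.1)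
      (Ne.symm hl.1) hkl
    linarith [hanti i j k l]
end

section
/- Let n ≥ 4. Suppose s : Fin n → Fin n → ℝ satisfies s i j = s j i and s i i = 0, and m : Fin n → Fin n → Fin n → Fin n → ℝ satisfies m i j k l = - (m j i k l). Assume that for all pairwise distinct i, j, k, l, s i k + s i l + s j k + s j l - 2 * m i j k l ≥ 0. Define Ric i = ∑_{j} s i j and R = ∑_{i} Ric i. Then for every index i one has (n - 4) * Ric i + R ≥ 0. -/
/-!
Fix `i ≠ j` and let `B` be the remaining `n - 2` indices. Summing the WPIC inequality for the
quadruples `(k, l, i, j)` over ordered pairs of distinct `k, l ∈ B`, the curvature terms `m k l i j`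
cancel by antisymmetry in `k, l`, and what remains is `2 (n - 3) (Ric i + Ric j - 2 s i j) ≥ 0`.
For `n ≥ 4` this gives `Ric i + Ric j - 2 s i j ≥ 0`, and summing over `j ≠ i` yields
`(n - 4) Ric i + R ≥ 0`.
-/

open Finset

section OffDiagonalSums

variable {α : Type*} [DecidableEq α]

theorem sum_sum_erase_add {R : Type*} [CommRing R] (B : Finset α) (g : α → R) :
    ∑ k ∈ B, ∑ l ∈ B.erase k, (g k + g l) = 2 * ((#B : R) - 1) * ∑ k ∈ B, g k := by
  have hrow : ∀ k ∈ B, ∑ l ∈ B.erase k, (g k + g l) = ((#B : R) - 2) * g k + ∑ l ∈ B, g l := by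
    intro k hk
    rw [sum_add_distrib, sum_const, card_erase_of_mem hk, nsmul_eq_mul, sum_erase_eq_sub hk,
      Nat.cast_pred (card_pos.mpr ⟨k, hk⟩)]
    ring
  rw [sum_congr rfl hrow, sum_add_distrib, ← mul_sum, sum_const, nsmul_eq_mul]
  ring

theorem sum_sum_erase_eq_zero_of_antisymm {M : Type*} [AddCommGroup M] [IsAddTorsionFree M]
    (B : Finset α) {f : α → α → M} (hf : ∀ a b, f a b = -f b a) :
    ∑ k ∈ B, ∑ l ∈ B.erase k, f k l = 0 := by
  have hdiag : ∀ a, f a a = 0 := fun a => self_eq_neg.mp (hf a a)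
  have hfull : ∑ k ∈ B, ∑ l ∈ B, f k l = 0 := by
    refine self_eq_neg.mp ?_
    calc ∑ k ∈ B, ∑ l ∈ B, f k l = ∑ l ∈ B, ∑ k ∈ B, f k l := sum_comm
      _ = -∑ k ∈ B, ∑ l ∈ B, f k l := by
        rw [← sum_neg_distrib]
        exact sum_congr rfl fun l _ => by
          rw [← sum_neg_distrib]
          exact sum_congr rfl fun k _ => hf k l
  rw [← hfull]
  refine sum_congr rfl fun k _ => ?_
  by_cases hk : k ∈ B
  · rw [sum_erase_eq_sub hk, hdiag, sub_zero]
  · rw [erase_eq_of_notMem hk]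

end OffDiagonalSums

section CurvatureConfiguration

variable {ι : Type*} [Fintype ι] [DecidableEq ι] {s : ι → ι → ℝ}

theorem sum_compl_pair_add (hsym : ∀ i j, s i j = s j i) (hdiag : ∀ i, s i i = 0)
    {i j : ι} (hij : i ≠ j) :
    ∑ k ∈ {i, j}ᶜ, (s k i + s k j) = ∑ k, s i k + ∑ k, s j k - 2 * s i j := by
  have htotal := sum_compl_add_sum {i, j} fun k => s k i + s k j
  have hcol : ∀ a, ∑ k, s k a = ∑ k, s a k := fun a => sum_congr rfl fun k _ => hsym k a
  rw [sum_pair hij, hdiag, hdiag, hsym j i] at htotal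
  rw [← hcol i, ← hcol j, ← sum_add_distrib]
  linarith

theorem ricci_add_ricci_sub_two_mul_nonneg {m : ι → ι → ι → ι → ℝ}
    (hcard : 4 ≤ Fintype.card ι) (hsym : ∀ i j, s i j = s j i) (hdiag : ∀ i, s i i = 0)
    (hanti : ∀ i j k l, m i j k l = - (m j i k l))
    (hWPIC : ∀ i j k l : ι, i ≠ j → i ≠ k → i ≠ l → j ≠ k → j ≠ l → k ≠ l →
      s i k + s i l + s j k + s j l - 2 * m i j k l ≥ 0)
    {i j : ι} (hij : i ≠ j) :
    0 ≤ ∑ k, s i k + ∑ k, s j k - 2 * s i j := by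
  set B : Finset ι := {i, j}ᶜ
  have hB : (#B : ℝ) = Fintype.card ι - 2 := by
    rw [card_compl, card_pair hij, Nat.cast_sub (by omega)]
    norm_num
  have hsum : 0 ≤ ∑ k ∈ B, ∑ l ∈ B.erase k, (s k i + s k j + s l i + s l j - 2 * m k l i j) := by
    refine sum_nonneg fun k hk => sum_nonneg fun l hl => ?_
    obtain ⟨hlk, hlB⟩ := mem_erase.mp hl
    simp only [B, mem_compl, mem_insert, mem_singleton, not_or] at hk hlB
    exact hWPIC k l i j (Ne.symm hlk) hk.1 hk.2 hlB.1 hlB.2 hij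
  have hcancel : ∑ k ∈ B, ∑ l ∈ B.erase k, (s k i + s k j + s l i + s l j - 2 * m k l i j)
      = 2 * ((#B : ℝ) - 1) * ∑ k ∈ B, (s k i + s k j) := by
    simp only [sum_sub_distrib, ← mul_sum,
      sum_sum_erase_eq_zero_of_antisymm B (fun a b => hanti a b i j), mul_zero, sub_zero,
      ← sum_sum_erase_add B fun k => s k i + s k j, add_assoc]
  rw [hcancel, hB, sum_compl_pair_add hsym hdiag hij] at hsum
  have hpos : (0 : ℝ) < 2 * ((Fintype.card ι : ℝ) - 2 - 1) := by
    have : (4 : ℝ) ≤ Fintype.card ι := by exact_mod_cast hcard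
    linarith
  exact nonneg_of_mul_nonneg_right hsum hpos

theorem sum_erase_ricci_add_ricci_sub_two_mul (hdiag : ∀ i, s i i = 0) (i : ι) :
    ∑ j ∈ univ.erase i, (∑ k, s i k + ∑ k, s j k - 2 * s i j)
      = ((Fintype.card ι : ℝ) - 4) * ∑ k, s i k + ∑ j, ∑ k, s j k := by
  rw [sum_erase_eq_sub (mem_univ i), sum_sub_distrib, sum_add_distrib, sum_const, card_univ,
    nsmul_eq_mul, ← mul_sum, hdiag]
  ring

end CurvatureConfiguration

theorem stmt_3 (n : ℕ) (hn : 4 ≤ n)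
    (s : Fin n → Fin n → ℝ) (m : Fin n → Fin n → Fin n → Fin n → ℝ)
    (hsym : ∀ i j, s i j = s j i) (hdiag : ∀ i, s i i = 0)
    (hanti : ∀ i j k l, m i j k l = - (m j i k l))
    (hWPIC : ∀ i j k l : Fin n, i ≠ j → i ≠ k → i ≠ l → j ≠ k → j ≠ l → k ≠ l →
      s i k + s i l + s j k + s j l - 2 * m i j k l ≥ 0)
    (Ric : Fin n → ℝ) (hRic : ∀ i, Ric i = ∑ j, s i j)
    (R : ℝ) (hR : R = ∑ i, Ric i) :
    ∀ i : Fin n, ((n : ℝ) - 4) * Ric i + R ≥ 0 := by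
  intro i
  have hcard : 4 ≤ Fintype.card (Fin n) := by rwa [Fintype.card_fin]
  have hpairs := sum_nonneg fun j (hj : j ∈ univ.erase i) =>
    ricci_add_ricci_sub_two_mul_nonneg hcard hsym hdiag hanti hWPIC (Ne.symm (ne_of_mem_erase hj))
  rw [sum_erase_ricci_add_ricci_sub_two_mul hdiag, Fintype.card_fin] at hpairs
  simpa only [hR, hRic] using hpairs
end

section
/- Let A₁, A₂, A₃, B₁, B₂, B₃, C₁, C₂, C₃, R be real numbers with R = 4(A₁ + A₂ + A₃) and R = 4(C₁ + C₂ + C₃). Assume A₁ ≥ 0, A₂ ≥ 0, A₃ ≥ 0, C₁ ≥ 0, C₂ ≥ 0, C₃ ≥ 0 and 0 ≤ B₁ ≤ B₂ ≤ B₃, and set u = R + 4B₁ - 4(B₂ + B₃). Then (1/2)R² + 8(B₁² + B₂² + B₃²) + 8(A₁ + C₁)B₁ + 16B₂B₃ - 8(A₂ + C₂)B₂ - 8(A₃ + C₃)B₃ - 16B₁(B₂ + B₃) ≥ (1/2)u². -/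
/-!
With `S = B₂ + B₃ - B₁` we have `u = R - 4S`, and after expanding `u²` the cross term `4RS`
splits, via `R = 4 tr A = 4 tr C`, into one copy of `8 (A₁ + A₂ + A₃) S` and one of
`8 (C₁ + C₂ + C₃) S`. The difference of the two sides is then `8` times the sum, over the
`A` and `C` blocks, of `a₁ (B₂ + B₃) + a₂ (B₃ - B₁) + a₃ (B₂ - B₁)`, which is nonnegative.
-/

lemma mul_sub_mul_sub_mul_add_sum_mul_nonneg {a₁ a₂ a₃ b₁ b₂ b₃ : ℝ}
    (ha₁ : 0 ≤ a₁) (ha₂ : 0 ≤ a₂) (ha₃ : 0 ≤ a₃)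
    (hb : 0 ≤ b₂ + b₃) (hb₁₂ : b₁ ≤ b₂) (hb₁₃ : b₁ ≤ b₃) :
    0 ≤ a₁ * b₁ - a₂ * b₂ - a₃ * b₃ + (a₁ + a₂ + a₃) * (b₂ + b₃ - b₁) := by
  have hsum : a₁ * b₁ - a₂ * b₂ - a₃ * b₃ + (a₁ + a₂ + a₃) * (b₂ + b₃ - b₁)
      = a₁ * (b₂ + b₃) + a₂ * (b₃ - b₁) + a₃ * (b₂ - b₁) := by ring
  rw [hsum]
  have h₃₁ : 0 ≤ b₃ - b₁ := sub_nonneg.mpr hb₁₃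
  have h₂₁ : 0 ≤ b₂ - b₁ := sub_nonneg.mpr hb₁₂
  exact add_nonneg (add_nonneg (mul_nonneg ha₁ hb) (mul_nonneg ha₂ h₃₁)) (mul_nonneg ha₃ h₂₁)

theorem stmt_5 (A₁ A₂ A₃ B₁ B₂ B₃ C₁ C₂ C₃ R u : ℝ)
    (hA : R = 4 * (A₁ + A₂ + A₃)) (hC : R = 4 * (C₁ + C₂ + C₃))
    (hA₁ : A₁ ≥ 0) (hA₂ : A₂ ≥ 0) (hA₃ : A₃ ≥ 0)
    (hC₁ : C₁ ≥ 0) (hC₂ : C₂ ≥ 0) (hC₃ : C₃ ≥ 0)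
    (hB₁ : 0 ≤ B₁) (hB₁₂ : B₁ ≤ B₂) (hB₂₃ : B₂ ≤ B₃)
    (hu : u = R + 4 * B₁ - 4 * (B₂ + B₃)) :
    (1/2) * R^2 + 8 * (B₁^2 + B₂^2 + B₃^2) + 8 * (A₁ + C₁) * B₁ + 16 * B₂ * B₃
      - 8 * (A₂ + C₂) * B₂ - 8 * (A₃ + C₃) * B₃ - 16 * B₁ * (B₂ + B₃)
    ≥ (1/2) * u^2 := by
  subst hu
  have hB : 0 ≤ B₂ + B₃ := by linarith
  have hB₁₃ : B₁ ≤ B₃ := hB₁₂.trans hB₂₃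
  have hA_block := mul_sub_mul_sub_mul_add_sum_mul_nonneg hA₁ hA₂ hA₃ hB hB₁₂ hB₁₃
  have hC_block := mul_sub_mul_sub_mul_add_sum_mul_nonneg hC₁ hC₂ hC₃ hB hB₁₂ hB₁₃
  linear_combination 8 * hA_block + 8 * hC_block
    - 2 * (B₂ + B₃ - B₁) * hA - 2 * (B₂ + B₃ - B₁) * hC
end

section
/- Let B₁, B₂, B₃, R be real numbers with 0 ≤ B₁ ≤ B₂ ≤ B₃ and R + 4B₁ - 4(B₂ + B₃) ≥ 0. Then 4(B₁² + B₂² + B₃²) + R²/4 ≤ R². -/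
/-!
With `S = B₂ + B₃ - B₁`, the Ricci condition reads `R ≥ 4 S`, and `S ≥ 0`, so `R² ≥ 16 S²`.
It therefore suffices that `B₁² + B₂² + B₃² ≤ 3 S²`, which holds with equality when all `Bᵢ`
coincide and otherwise gains from the differences `B₂ - B₁, B₃ - B₁ ≥ 0`.
-/

lemma sq_add_sq_add_sq_le_three_mul_sq_add_sub {a b c : ℝ} (ha : 0 ≤ a) (hab : a ≤ b)
    (hac : a ≤ c) : a ^ 2 + b ^ 2 + c ^ 2 ≤ 3 * (b + c - a) ^ 2 := by
  have hx : 0 ≤ b - a := sub_nonneg.mpr hab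
  have hy : 0 ≤ c - a := sub_nonneg.mpr hac
  -- the difference is `4a(x + y) + 2x² + 2y² + 6xy` with `x = b - a`, `y = c - a`
  nlinarith [mul_nonneg ha (add_nonneg hx hy), mul_nonneg hx hy, sq_nonneg (b - a),
    sq_nonneg (c - a)]

theorem stmt_6 (B₁ B₂ B₃ R : ℝ)
    (hB₁ : 0 ≤ B₁) (hB₁₂ : B₁ ≤ B₂) (hB₂₃ : B₂ ≤ B₃)
    (hRc : R + 4 * B₁ - 4 * (B₂ + B₃) ≥ 0) :
    4 * (B₁^2 + B₂^2 + B₃^2) + R^2 / 4 ≤ R^2 := by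
  have hS : 0 ≤ B₂ + B₃ - B₁ := by linarith
  have hR : 4 * (B₂ + B₃ - B₁) ≤ R := by linarith
  have hR_sq : (4 * (B₂ + B₃ - B₁)) ^ 2 ≤ R ^ 2 := pow_le_pow_left₀ (by positivity) hR 2
  have hB_sq := sq_add_sq_add_sq_le_three_mul_sq_add_sub hB₁ hB₁₂ (hB₁₂.trans hB₂₃)
  linarith
end

section
/- Let A₁, A₂, A₃, B₁, B₂, B₃, C₁, C₂, C₃, R be real numbers with R = 4(A₁ + A₂ + A₃), R = 4(C₁ + C₂ + C₃), A₁ + A₂ ≥ 0, C₁ + C₂ ≥ 0, and B₃ ≥ 0. Then 2(4(B₁² + B₂² + B₃²) + R²/4) - 8(A₃ + C₃)B₃ - 16B₁B₂ ≥ (1/2)(R - 4B₃)². -/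
theorem stmt_10 (A₁ A₂ A₃ B₁ B₂ B₃ C₁ C₂ C₃ R : ℝ)
    (hA : R = 4 * (A₁ + A₂ + A₃)) (hC : R = 4 * (C₁ + C₂ + C₃))
    (hPIC₁ : A₁ + A₂ ≥ 0) (hPIC₂ : C₁ + C₂ ≥ 0) (hB₃ : B₃ ≥ 0) :
    2 * (4 * (B₁^2 + B₂^2 + B₃^2) + R^2 / 4) - 8 * (A₃ + C₃) * B₃ - 16 * B₁ * B₂
    ≥ (1/2) * (R - 4 * B₃)^2 := by
  have gap_eq : 2 * (4 * (B₁^2 + B₂^2 + B₃^2) + R^2 / 4) - 8 * (A₃ + C₃) * B₃ - 16 * B₁ * B₂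
      - (1/2) * (R - 4 * B₃)^2 = 8 * (B₁ - B₂)^2 + 8 * B₃ * ((A₁ + A₂) + (C₁ + C₂)) := by
    linear_combination 2 * B₃ * hA + 2 * B₃ * hC
  have gap_nonneg : 0 ≤ 8 * (B₁ - B₂)^2 + 8 * B₃ * ((A₁ + A₂) + (C₁ + C₂)) :=
    add_nonneg (by positivity) (mul_nonneg (by positivity) (add_nonneg hPIC₁ hPIC₂))
  linarith
end

section
/- Let T > 0 and let m₁, m₂, m₃ : ℝ → ℝ be differentiable functions satisfying, for all t ∈ [0, T), the ODE system m₁'(t) = m₁(t)² + m₂(t)m₃(t), m₂'(t) = m₂(t)² + m₁(t)m₃(t), m₃'(t) = m₃(t)² + m₁(t)m₂(t), together with m₁(t) ≤ m₂(t) ≤ m₃(t) for all t ∈ [0, T). If 2m₁(0) + m₂(0) + m₃(0) ≥ 0, then 2m₁(t) + m₂(t) + m₃(t) ≥ 0 for all t ∈ [0, T). -/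
/-! Along the flow, `(2m₁ + m₂ + m₃)' = 2m₁² + m₁s + s²` with `s = m₂ + m₃`. This quadratic form is
positive definite (its discriminant is `1 - 8 < 0`), so `2m₁ + m₂ + m₃` is nondecreasing in time. -/

open Set

lemma two_mul_add_add_reaction_nonneg (a b c : ℝ) :
    0 ≤ 2 * (a ^ 2 + b * c) + (b ^ 2 + a * c) + (c ^ 2 + a * b) := by
  nlinarith [sq_nonneg (4 * a + b + c), sq_nonneg (b + c)]

theorem stmt_16_general (T : ℝ) (m₁ m₂ m₃ : ℝ → ℝ)
    (hd₁ : Differentiable ℝ m₁) (hd₂ : Differentiable ℝ m₂) (hd₃ : Differentiable ℝ m₃)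
    (hode₁ : ∀ t ∈ Set.Ico (0 : ℝ) T, deriv m₁ t = (m₁ t)^2 + m₂ t * m₃ t)
    (hode₂ : ∀ t ∈ Set.Ico (0 : ℝ) T, deriv m₂ t = (m₂ t)^2 + m₁ t * m₃ t)
    (hode₃ : ∀ t ∈ Set.Ico (0 : ℝ) T, deriv m₃ t = (m₃ t)^2 + m₁ t * m₂ t)
    (h0 : 2 * m₁ 0 + m₂ 0 + m₃ 0 ≥ 0) :
    ∀ t ∈ Set.Ico (0 : ℝ) T, 2 * m₁ t + m₂ t + m₃ t ≥ 0 := by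
  intro t ht
  set f : ℝ → ℝ := fun s => 2 * m₁ s + m₂ s + m₃ s
  have hf : Differentiable ℝ f := ((hd₁.const_mul 2).add hd₂).add hd₃
  have hf' : ∀ s ∈ Ico 0 T, 0 ≤ deriv f s := by
    intro s hs
    have hderiv : deriv f s = 2 * deriv m₁ s + deriv m₂ s + deriv m₃ s :=
      ((((hd₁ s).hasDerivAt.const_mul 2).add (hd₂ s).hasDerivAt).add (hd₃ s).hasDerivAt).deriv
    rw [hderiv, hode₁ s hs, hode₂ s hs, hode₃ s hs]
    exact two_mul_add_add_reaction_nonneg _ _ _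
  have hmono : MonotoneOn f (Icc 0 t) :=
    monotoneOn_of_deriv_nonneg (convex_Icc 0 t) hf.continuous.continuousOn hf.differentiableOn
      fun s hs => by
        rw [interior_Icc] at hs
        exact hf' s ⟨hs.1.le, hs.2.trans ht.2⟩
  exact h0.trans (hmono ⟨le_rfl, ht.1⟩ ⟨ht.1, le_rfl⟩ ht.1)

theorem stmt_16 (T : ℝ) (hT : 0 < T) (m₁ m₂ m₃ : ℝ → ℝ)
    (hd₁ : Differentiable ℝ m₁) (hd₂ : Differentiable ℝ m₂) (hd₃ : Differentiable ℝ m₃)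
    (hode₁ : ∀ t ∈ Set.Ico (0 : ℝ) T, deriv m₁ t = (m₁ t)^2 + m₂ t * m₃ t)
    (hode₂ : ∀ t ∈ Set.Ico (0 : ℝ) T, deriv m₂ t = (m₂ t)^2 + m₁ t * m₃ t)
    (hode₃ : ∀ t ∈ Set.Ico (0 : ℝ) T, deriv m₃ t = (m₃ t)^2 + m₁ t * m₂ t)
    (hord : ∀ t ∈ Set.Ico (0 : ℝ) T, m₁ t ≤ m₂ t ∧ m₂ t ≤ m₃ t)
    (h0 : 2 * m₁ 0 + m₂ 0 + m₃ 0 ≥ 0) :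
    ∀ t ∈ Set.Ico (0 : ℝ) T, 2 * m₁ t + m₂ t + m₃ t ≥ 0 :=
  stmt_16_general T m₁ m₂ m₃ hd₁ hd₂ hd₃ hode₁ hode₂ hode₃ h0
end
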